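/- arXiv:1205.4795 — 2 statements merged into one kernel-verified Lean document; each statement's English description precedes it below -/
import Mathlib

section
/- Let ε be a real random variable with distribution function F and P(ε ≤ 0) = τ. Then for any a ≥ 0, E[ρ_τ(ε - a) - ρ_τ(ε)] = ∫₀^a (F(s) - F(0)) ds, where ρ_τ(u) = u(τ - 1{u ≤ 0}). -/
open MeasureTheory Set ENNReal

noncomputable def rho (τ u : ℝ) : ℝ := u * (τ - if u ≤ 0 then 1 else 0)

lemma rho_eq (τ u : ℝ) : rho τ u = τ * u + max (-u) 0 := by
  unfold rho
  split_ifs with h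
  · rw [max_eq_left (by linarith)]; ring
  · rw [max_eq_right (by linarith)]; ring

theorem expected_rho_increment (τ : ℝ) (hτ : τ ∈ Set.Ioo (0:ℝ) 1)
    (μ : Measure ℝ) [IsProbabilityMeasure μ]
    (hint : Integrable (fun x : ℝ => x) μ)
    (F : ℝ → ℝ) (hF : ∀ t, F t = (μ (Set.Iic t)).toReal) (hF0 : F 0 = τ)
    (a : ℝ) (ha : 0 ≤ a) :
    ∫ x, (rho τ (x - a) - rho τ x) ∂μ = ∫ s in (0:ℝ)..a, (F s - F 0) := by
  set g : ℝ → ℝ := fun x => max (a - x) 0 - max (-x) 0 with hg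
  have hg_nonneg : ∀ x, 0 ≤ g x := by
    intro x
    rcases le_or_gt x 0 with h | h
    · simp [hg, max_eq_left (by linarith : (0:ℝ) ≤ a - x), max_eq_left (by linarith : (0:ℝ) ≤ -x)]
      linarith
    · simp [hg, max_eq_right (by linarith : -x ≤ (0:ℝ))]
  have hg_le : ∀ x, g x ≤ a := by
    intro x
    rcases le_or_gt x 0 with h | h
    · simp [hg, max_eq_left (by linarith : (0:ℝ) ≤ a - x), max_eq_left (by linarith : (0:ℝ) ≤ -x)]
    · rcases le_or_gt x a with h2 | h2
      · simp only [hg, max_eq_right (by linarith : -x ≤ (0:ℝ)), max_eq_left (by linarith : (0:ℝ) ≤ a - x)]; linarith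
      · simp [hg, max_eq_right (by linarith : -x ≤ (0:ℝ)), max_eq_right (by linarith : a - x ≤ (0:ℝ))]
        exact ha
  have hg_cont : Continuous g := by
    apply Continuous.sub <;> exact Continuous.max (by continuity) continuous_const
  have hg_int : Integrable g μ := by
    refine Integrable.mono' (integrable_const a) hg_cont.aestronglyMeasurable ?_
    filter_upwards with x
    rw [Real.norm_eq_abs, abs_of_nonneg (hg_nonneg x)]
    exact hg_le x
  -- pointwise identity
  have hpt : ∀ x, rho τ (x - a) - rho τ x = g x + (-(τ * a)) := by
    intro x
    rw [rho_eq, rho_eq, hg]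
    ring_nf
  -- now the integrals
  have hLHS : ∫ x, (rho τ (x - a) - rho τ x) ∂μ = (∫ x, g x ∂μ) - τ * a := by
    simp_rw [hpt]
    rw [integral_add hg_int (integrable_const _), integral_const]
    simp
    ring
  rw [hLHS]
  -- RHS
  have hFmono : Monotone F := by
    intro s t hst
    rw [hF s, hF t]
    exact ENNReal.toReal_mono (measure_ne_top μ _) (measure_mono (Iic_subset_Iic.mpr hst))
  have hRHS : ∫ s in (0:ℝ)..a, (F s - F 0) = (∫ s in (0:ℝ)..a, F s) - τ * a := by
    rw [intervalIntegral.integral_sub (hFmono.intervalIntegrable) intervalIntegrable_const,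
      intervalIntegral.integral_const, hF0]
    simp
    ring
  rw [hRHS]
  congr 1
  -- key: ∫ g dμ = ∫ F over [0,a]
  have hmeas : Measurable (Function.uncurry fun s x : ℝ => (Iic s).indicator (1 : ℝ → ℝ≥0∞) x) := by
    have : Function.uncurry (fun s x : ℝ => (Iic s).indicator (1 : ℝ → ℝ≥0∞) x)
        = Set.indicator {p : ℝ × ℝ | p.2 ≤ p.1} (1 : ℝ × ℝ → ℝ≥0∞) := by
      ext p
      simp [Function.uncurry, Set.indicator_apply]
    rw [this]
    exact Measurable.indicator measurable_const (measurableSet_le measurable_snd measurable_fst)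
  have hswap : ∫⁻ s in Ioc 0 a, μ (Iic s) ∂(volume : Measure ℝ)
      = ∫⁻ x, ENNReal.ofReal (g x) ∂μ := by
    have h1 : ∀ s : ℝ, μ (Iic s) = ∫⁻ x, (Iic s).indicator (1 : ℝ → ℝ≥0∞) x ∂μ := by
      intro s; rw [lintegral_indicator_one measurableSet_Iic]
    simp_rw [h1]
    rw [lintegral_lintegral_swap hmeas.aemeasurable]
    congr 1
    ext x
    have h2 : ∀ s : ℝ, (Iic s).indicator (1 : ℝ → ℝ≥0∞) x
        = (Ici x).indicator (1 : ℝ → ℝ≥0∞) s := by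
      intro s; simp [Set.indicator_apply]
    simp_rw [h2]
    rw [lintegral_indicator_one measurableSet_Ici, Measure.restrict_apply measurableSet_Ici]
    rcases le_or_gt x 0 with h | h
    · rw [show Ici x ∩ Ioc 0 a = Ioc 0 a from inter_eq_right.mpr (fun s hs => le_trans h (le_of_lt hs.1))]
      rw [Real.volume_Ioc]
      congr 1
      simp [hg, max_eq_left (by linarith : (0:ℝ) ≤ a - x), max_eq_left (by linarith : (0:ℝ) ≤ -x)]
    · rw [show Ici x ∩ Ioc 0 a = Icc x a from by
        ext s; simp only [mem_inter_iff, mem_Ici, mem_Ioc, mem_Icc]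
        constructor
        · rintro ⟨h1, _, h3⟩; exact ⟨h1, h3⟩
        · rintro ⟨h1, h3⟩; exact ⟨h1, lt_of_lt_of_le h h1, h3⟩]
      rw [Real.volume_Icc]
      rcases le_or_gt x a with h2 | h2
      · congr 1
        simp [hg, max_eq_right (by linarith : -x ≤ (0:ℝ)), max_eq_left (by linarith : (0:ℝ) ≤ a - x)]
      · rw [ENNReal.ofReal_of_nonpos (by linarith)]
        rw [show g x = 0 from by
          simp [hg, max_eq_right (by linarith : -x ≤ (0:ℝ)), max_eq_right (by linarith : a - x ≤ (0:ℝ))]]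
        simp
  have hFmble : Measurable fun s => μ (Iic s) := by
    apply Monotone.measurable
    intro s t hst
    exact measure_mono (Iic_subset_Iic.mpr hst)
  calc ∫ x, g x ∂μ = (∫⁻ x, ENNReal.ofReal (g x) ∂μ).toReal := by
        rw [integral_eq_lintegral_of_nonneg_ae (Filter.Eventually.of_forall hg_nonneg)
          hg_cont.aestronglyMeasurable]
    _ = (∫⁻ s in Ioc 0 a, μ (Iic s) ∂(volume : Measure ℝ)).toReal := by rw [hswap]
    _ = ∫ s in Ioc 0 a, (μ (Iic s)).toReal ∂(volume : Measure ℝ) := by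
        rw [integral_toReal (hFmble.aemeasurable.restrict)
          (Filter.Eventually.of_forall fun s => measure_lt_top μ _)]
    _ = ∫ s in (0:ℝ)..a, F s := by
        rw [intervalIntegral.integral_of_le ha]
        exact setIntegral_congr_fun measurableSet_Ioc fun s _ => (hF s).symm
end

section
/- Suppose the distribution function F of ε satisfies |F(u) - F(0) - u f(0)| ≤ c₂ u² for all |u| ≤ c₁, where f(0) > 0, and P(ε ≤ 0) = τ. Then for any a with 0 ≤ a ≤ c₁, E[ρ_τ(ε - a) - ρ_τ(ε)] ≥ (1/2) f(0) a² - (c₂/3) a³. In particular, the expected quantile loss increment is bounded below by a quadratic minus a cubic remainder. -/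
/-! Since `ρ_τ(x - a) - ρ_τ(x) = ∫₀ᵃ 1{x ≤ s} ds - aτ` for `a ≥ 0`, Fubini gives
`E[ρ_τ(ε - a) - ρ_τ(ε)] = ∫₀ᵃ (F s - F 0) ds`, and the approximation hypothesis bounds the
integrand below by `f(0) s - c₂ s²` on `[0, a]`. -/

open MeasureTheory

open Set

lemma rho_sub_sub_rho (τ : ℝ) {a : ℝ} (ha : 0 ≤ a) (x : ℝ) :
    rho τ (x - a) - rho τ x = min a (max (a - x) 0) - a * τ := by
  unfold rho
  split_ifs <;> grind

lemma min_max_sub_eq_setIntegral_indicator {a : ℝ} (ha : 0 ≤ a) (x : ℝ) :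
    min a (max (a - x) 0) = ∫ s in Icc 0 a, (Ici x).indicator 1 s := by
  rw [integral_indicator_one measurableSet_Ici, measureReal_restrict_apply measurableSet_Ici,
    show Ici x ∩ Icc 0 a = Icc (max x 0) a by ext; simp; grind, Real.volume_real_Icc]
  grind

theorem integral_min_max_sub_eq_setIntegral_measureReal_Iic (μ : Measure ℝ) [IsFiniteMeasure μ]
    {a : ℝ} (ha : 0 ≤ a) :
    ∫ x, min a (max (a - x) 0) ∂μ = ∫ s in Icc 0 a, μ.real (Iic s) := by
  have hprod : Integrable (Function.uncurry fun x s => (Ici x).indicator (1 : ℝ → ℝ) s)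
      (μ.prod (volume.restrict (Icc 0 a))) := by
    have : Function.uncurry (fun x s => (Ici x).indicator (1 : ℝ → ℝ) s)
        = {p : ℝ × ℝ | p.1 ≤ p.2}.indicator 1 := by
      ext ⟨x, s⟩; simp [indicator_apply]
    rw [this]
    exact (integrable_const 1).indicator (measurableSet_le measurable_fst measurable_snd)
  simp_rw [min_max_sub_eq_setIntegral_indicator ha, integral_integral_swap hprod,
    ← integral_indicator_one measurableSet_Iic]
  congr with s

lemma integrableOn_measureReal_Iic (μ : Measure ℝ) [IsFiniteMeasure μ] {K : Set ℝ}
    (hK : IsCompact K) : IntegrableOn (fun s => μ.real (Iic s)) K :=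
  (Monotone.locallyIntegrable fun _ _ hst => measureReal_mono (Iic_subset_Iic.mpr hst)
    ).integrableOn_isCompact hK

theorem integral_rho_sub_sub_rho (μ : Measure ℝ) [IsProbabilityMeasure μ] (τ : ℝ) {a : ℝ}
    (ha : 0 ≤ a) :
    ∫ x, (rho τ (x - a) - rho τ x) ∂μ = ∫ s in Icc 0 a, (μ.real (Iic s) - τ) := by
  have hbound : ∀ x, ‖min a (max (a - x) 0)‖ ≤ a := fun x =>
    abs_le.mpr ⟨by linarith [le_min ha (le_max_right (a - x) 0)], min_le_left _ _⟩
  simp_rw [rho_sub_sub_rho τ ha]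
  rw [integral_sub (.of_bound (by fun_prop) a (.of_forall hbound)) (integrable_const _),
    integral_min_max_sub_eq_setIntegral_measureReal_Iic μ ha,
    integral_sub (integrableOn_measureReal_Iic μ isCompact_Icc) (integrable_const _),
    integral_const, setIntegral_const]
  simp [Real.volume_real_Icc_of_le ha, mul_comm]

lemma integral_Icc_mul_sub_mul_sq {a : ℝ} (ha : 0 ≤ a) (b c : ℝ) :
    ∫ s in Icc 0 a, (b * s - c * s ^ 2) = b / 2 * a ^ 2 - c / 3 * a ^ 3 := by
  rw [integral_Icc_eq_integral_Ioc, ← intervalIntegral.integral_of_le ha,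
    intervalIntegral.integral_sub (by apply Continuous.intervalIntegrable; fun_prop)
      (by apply Continuous.intervalIntegrable; fun_prop),
    intervalIntegral.integral_const_mul, intervalIntegral.integral_const_mul]
  simp only [integral_id, integral_pow]
  ring

theorem expected_rho_increment_lower_bound_general (τ : ℝ)
    (μ : Measure ℝ) [IsProbabilityMeasure μ]
    (F : ℝ → ℝ) (hF : ∀ t, F t = (μ (Set.Iic t)).toReal) (hF0 : F 0 = τ)
    (c₁ c₂ f0 : ℝ)
    (happrox : ∀ u : ℝ, |u| ≤ c₁ → |F u - F 0 - u * f0| ≤ c₂ * u ^ 2)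
    (a : ℝ) (ha0 : 0 ≤ a) (ha1 : a ≤ c₁) :
    (1 / 2) * f0 * a ^ 2 - (c₂ / 3) * a ^ 3 ≤
      ∫ x, (rho τ (x - a) - rho τ x) ∂μ := by
  have hlower : ∀ s ∈ Icc 0 a, f0 * s - c₂ * s ^ 2 ≤ μ.real (Iic s) - τ := by
    intro s ⟨hs0, hsa⟩
    have h := (abs_le.mp (happrox s (by rw [abs_of_nonneg hs0]; linarith))).1
    rw [hF, hF0] at h
    linarith [measureReal_def μ (Iic s)]
  rw [integral_rho_sub_sub_rho μ τ ha0]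
  calc (1 / 2) * f0 * a ^ 2 - (c₂ / 3) * a ^ 3 = ∫ s in Icc 0 a, (f0 * s - c₂ * s ^ 2) := by
        rw [integral_Icc_mul_sub_mul_sq ha0]; ring
    _ ≤ ∫ s in Icc 0 a, (μ.real (Iic s) - τ) := by
        refine setIntegral_mono_on ?_ ?_ measurableSet_Icc hlower
        · exact Continuous.integrableOn_Icc (by fun_prop)
        · exact (integrableOn_measureReal_Iic μ isCompact_Icc).sub (integrableOn_const (by simp))

theorem expected_rho_increment_lower_bound (τ : ℝ) (hτ : τ ∈ Set.Ioo (0:ℝ) 1)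
    (μ : Measure ℝ) [IsProbabilityMeasure μ]
    (hint : Integrable (fun x : ℝ => x) μ)
    (F : ℝ → ℝ) (hF : ∀ t, F t = (μ (Set.Iic t)).toReal) (hF0 : F 0 = τ)
    (c₁ c₂ f0 : ℝ) (hc₁ : 0 < c₁) (hc₂ : 0 < c₂) (hf0 : 0 < f0)
    (happrox : ∀ u : ℝ, |u| ≤ c₁ → |F u - F 0 - u * f0| ≤ c₂ * u ^ 2)
    (a : ℝ) (ha0 : 0 ≤ a) (ha1 : a ≤ c₁) :
    (1 / 2) * f0 * a ^ 2 - (c₂ / 3) * a ^ 3 ≤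
      ∫ x, (rho τ (x - a) - rho τ x) ∂μ :=
  expected_rho_increment_lower_bound_general τ μ F hF hF0 c₁ c₂ f0 happrox a ha0 ha1
end
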